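/- arXiv:2304.01497 — 5 statements merged into one kernel-verified Lean document; each statement's English description precedes it below -/
import Mathlib

section
/- Let φ : 𝔻 → 𝔻 be holomorphic and surjective. Then for every f in the Dirichlet space, ‖C_φ f‖_D ≥ ‖f‖_D', where ‖f‖_D'² = ∫_𝔻 |f'(w)|² dA(w); consequently the composition operator C_φ is bounded below on the Dirichlet seminorm and has closed range on D(𝔻). -/
open MeasureTheory Metric Complex Filter Set
open scoped ENNReal NNReal

noncomputable section

/-- The open unit disc in ℂ. -/
def UD : Set ℂ := Metric.ball 0 1

/-- Pseudo-hyperbolic metric. -/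
def rho (z w : ℂ) : ℝ := ‖(z - w) / (1 - (starRingEnd ℂ) z * w)‖

/-- Bergman-metric ball D(z,r). -/
def bergmanBall (z : ℂ) (r : ℝ) : Set ℂ :=
  {w ∈ UD | (1/2) * Real.log ((1 + rho z w) / (1 - rho z w)) < r}

/-- Counting function n_φ. -/
def countFn (φ : ℂ → ℂ) (w : ℂ) : ℕ := Set.ncard {z ∈ UD | φ z = w}

/-- Squared Dirichlet norm (as an extended real). -/
def Dnorm2 (f : ℂ → ℂ) : ℝ≥0∞ :=
  (‖f 0‖₊ : ℝ≥0∞) ^ 2 + ∫⁻ z in UD, (‖deriv f z‖₊ : ℝ≥0∞) ^ 2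

/-! The non-univalent change of variables inequality
`∫_{φ(𝔻)} |f'|² ≤ ∫_𝔻 |f' ∘ φ|² |φ'|² = ∫_𝔻 |(f ∘ φ)'|²` needs no local injectivity: pushing
`|det Dφ| dx` forward along `φ` gives a measure dominating Lebesgue measure on `φ(𝔻)`, because
`|φ(A)| ≤ ∫_A |det Dφ|` holds for every measurable `A`, critical points included. Surjectivity then puts all of `𝔻` inside `φ(𝔻)`. -/

section ChangeOfVariables

variable {E : Type*} [NormedAddCommGroup E] [NormedSpace ℝ E] [FiniteDimensional ℝ E]
  [MeasurableSpace E] [BorelSpace E] (μ : Measure E) [μ.IsAddHaarMeasure]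
  {s : Set E} {f : E → E} {f' : E → E →L[ℝ] E}

theorem restrict_image_le_map_withDensity_abs_det_fderiv (hs : MeasurableSet s)
    (hf' : ∀ x ∈ s, HasFDerivWithinAt f (f' x) s x) {u : E → E} (hu : Measurable u)
    (huf : EqOn u f s) :
    μ.restrict (f '' s) ≤
      ((μ.withDensity fun x => ENNReal.ofReal |(f' x).det|).restrict s).map u := by
  refine Measure.le_iff.2 fun t ht => ?_
  have himage : t ∩ f '' s = f '' (s ∩ u ⁻¹' t) := by
    rw [inter_comm, ← image_inter_preimage]
    refine congrArg _ (Subset.antisymm (fun x hx => ⟨hx.1, ?_⟩) fun x hx => ⟨hx.1, ?_⟩)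
    · rw [mem_preimage, huf hx.1]; exact hx.2
    · rw [mem_preimage, ← huf hx.1]; exact hx.2
  rw [Measure.restrict_apply ht, Measure.map_apply hu ht, Measure.restrict_apply (hu ht),
    withDensity_apply _ ((hu ht).inter hs), himage, inter_comm (u ⁻¹' t)]
  exact addHaar_image_le_lintegral_abs_det_fderiv μ (hs.inter (hu ht))
    fun x hx => (hf' x hx.1).mono inter_subset_left

theorem lintegral_image_le_lintegral_abs_det_fderiv_mul (hs : MeasurableSet s)
    (hf' : ∀ x ∈ s, HasFDerivWithinAt f (f' x) s x) (g : E → ℝ≥0∞) :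
    ∫⁻ x in f '' s, g x ∂μ ≤ ∫⁻ x in s, ENNReal.ofReal |(f' x).det| * g (f x) ∂μ := by
  classical
  have hfs : ContinuousOn f s := fun x hx => (hf' x hx).continuousWithinAt
  have hu : Measurable (s.piecewise f 0) :=
    hfs.measurable_piecewise continuous_zero.continuousOn hs
  have huf : EqOn (s.piecewise f 0) f s := piecewise_eqOn _ _ _
  calc ∫⁻ x in f '' s, g x ∂μ
      ≤ ∫⁻ x, g x ∂((μ.withDensity fun x => ENNReal.ofReal |(f' x).det|).restrict s).map
          (s.piecewise f 0) :=
        lintegral_mono' (restrict_image_le_map_withDensity_abs_det_fderiv μ hs hf' hu huf) le_rfl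
    _ ≤ ∫⁻ x in s, g (s.piecewise f 0 x) ∂μ.withDensity fun x => ENNReal.ofReal |(f' x).det| :=
        lintegral_map_le _ _
    _ = ∫⁻ x in s, g (f x) ∂μ.withDensity fun x => ENNReal.ofReal |(f' x).det| :=
        setLIntegral_congr_fun hs fun x hx => by rw [huf hx]
    _ = ∫⁻ x in s, ENNReal.ofReal |(f' x).det| * g (f x) ∂μ :=
        setLIntegral_withDensity_eq_setLIntegral_mul_non_measurable₀ μ
          (aemeasurable_ofReal_abs_det_fderivWithin μ hs hf') _ hs
          (ae_of_all _ fun _ => ENNReal.ofReal_lt_top)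

end ChangeOfVariables

theorem ContinuousLinearMap.det_restrictScalars_toSpanSingleton (c : ℂ) :
    ((ContinuousLinearMap.toSpanSingleton ℂ c).restrictScalars ℝ).det = Complex.normSq c := by
  have hlmul : (((ContinuousLinearMap.toSpanSingleton ℂ c).restrictScalars ℝ) : ℂ →ₗ[ℝ] ℂ)
      = Algebra.lmul ℝ ℂ c := by
    ext z
    simp [mul_comm]
  rw [ContinuousLinearMap.det, hlmul, ← Algebra.norm_apply, Algebra.norm_complex_apply]

theorem lintegral_image_le_lintegral_enorm_deriv_sq_mul {s : Set ℂ} {φ φ' : ℂ → ℂ}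
    (hs : MeasurableSet s) (hφ : ∀ z ∈ s, HasDerivWithinAt φ (φ' z) s z) (g : ℂ → ℝ≥0∞) :
    ∫⁻ w in φ '' s, g w ≤ ∫⁻ z in s, ‖φ' z‖ₑ ^ 2 * g (φ z) := by
  refine (lintegral_image_le_lintegral_abs_det_fderiv_mul volume hs
    (fun z hz => (hφ z hz).hasFDerivWithinAt.restrictScalars ℝ) g).trans_eq ?_
  refine setLIntegral_congr_fun hs fun z _ => ?_
  rw [ContinuousLinearMap.det_restrictScalars_toSpanSingleton, abs_of_nonneg (normSq_nonneg _),
    normSq_eq_norm_sq, ENNReal.ofReal_pow (norm_nonneg _), ofReal_norm]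

/-- if φ : 𝔻 → 𝔻 is holomorphic and surjective then
‖C_φ f‖_D² = |f(φ(0))|² + ∫_𝔻 |(f∘φ)'|² dA ≥ ∫_𝔻 |f'|² dA = ‖f‖_D'² for every f in the
Dirichlet space; in particular C_φ is bounded below on the Dirichlet seminorm. -/
theorem stmt2 (φ f : ℂ → ℂ)
    (hφ : DifferentiableOn ℂ φ UD) (hmaps : MapsTo φ UD UD) (hsurj : UD ⊆ φ '' UD)
    (hf : DifferentiableOn ℂ f UD) :
    (∫⁻ w in UD, (‖deriv f w‖₊ : ℝ≥0∞) ^ 2)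
      ≤ (‖f (φ 0)‖₊ : ℝ≥0∞) ^ 2 + ∫⁻ z in UD, (‖deriv (f ∘ φ) z‖₊ : ℝ≥0∞) ^ 2 := by
  have hUD : IsOpen UD := isOpen_ball
  have hφ' : ∀ z ∈ UD, DifferentiableAt ℂ φ z := fun z hz =>
    (hφ z hz).differentiableAt (hUD.mem_nhds hz)
  have hchain : ∀ z ∈ UD, ‖deriv φ z‖ₑ ^ 2 * (‖deriv f (φ z)‖₊ : ℝ≥0∞) ^ 2
      = (‖deriv (f ∘ φ) z‖₊ : ℝ≥0∞) ^ 2 := fun z hz => by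
    have hfφ : DifferentiableAt ℂ f (φ z) :=
      (hf _ (hmaps hz)).differentiableAt (hUD.mem_nhds (hmaps hz))
    rw [deriv_comp z hfφ (hφ' z hz), nnnorm_mul, ENNReal.coe_mul, mul_pow, mul_comm,
      enorm_eq_nnnorm]
  calc ∫⁻ w in UD, (‖deriv f w‖₊ : ℝ≥0∞) ^ 2
      ≤ ∫⁻ w in φ '' UD, (‖deriv f w‖₊ : ℝ≥0∞) ^ 2 := lintegral_mono_set hsurj
    _ ≤ ∫⁻ z in UD, ‖deriv φ z‖ₑ ^ 2 * (‖deriv f (φ z)‖₊ : ℝ≥0∞) ^ 2 :=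
        lintegral_image_le_lintegral_enorm_deriv_sq_mul hUD.measurableSet
          (fun z hz => (hφ' z hz).hasDerivAt.hasDerivWithinAt) _
    _ = ∫⁻ z in UD, (‖deriv (f ∘ φ) z‖₊ : ℝ≥0∞) ^ 2 :=
        setLIntegral_congr_fun hUD.measurableSet hchain
    _ ≤ (‖f (φ 0)‖₊ : ℝ≥0∞) ^ 2 + ∫⁻ z in UD, (‖deriv (f ∘ φ) z‖₊ : ℝ≥0∞) ^ 2 := le_add_self
end
end

section
/- Let ζ ∈ 𝕋 (the unit circle), f_ζ(z) = (1 + conj(ζ)·z)/2, and f_k = f_ζ^k. Let U be an open neighborhood of ζ in ℂ. Then the ratio (∫_{𝔻∖U} |f_k'(z)|² dA(z)) / (∫_𝔻 |f_k'(z)|² dA(z)) tends to 0 as k → ∞. -/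
/-!
Since `f_k' = (k/2) conj ζ · f_ζ^(k-1)`, the factor `k²/4` cancels and the ratio equals
`∫_{𝔻∖U} |f_ζ|^(2(k-1)) dA / ∫_𝔻 |f_ζ|^(2(k-1)) dA`. On the compact set `closure 𝔻 ∖ U` the peak
function satisfies `|f_ζ|² ≤ M < 1`, while `|f_ζ|² > r := (M + 1)/2` on an open subset `V` of `𝔻`
accumulating at `ζ`, which has positive area. Hence the ratio is at most
`(M/r)^(k-1) · |𝔻 ∖ U| / |V| → 0`.
-/


open MeasureTheory Metric Complex Filter Set
open scoped ENNReal NNReal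

noncomputable section

open ComplexConjugate Topology

section Concentration

variable {α : Type*} [MeasurableSpace α] {μ : Measure α} {g : α → ℝ} {S T V : Set α} {M r : ℝ}

theorem tendsto_setIntegral_pow_div_setIntegral_pow_atTop_zero (hg : ∀ x, 0 ≤ g x)
    (hgT : ∀ n : ℕ, IntegrableOn (fun x => g x ^ n) T μ)
    (hS : μ S ≠ ∞) (hSM : ∀ x ∈ S, g x ≤ M) (hM : 0 ≤ M) (hMr : M < r)
    (hV : MeasurableSet V) (hVT : V ⊆ T) (hV₀ : μ V ≠ 0) (hV_top : μ V ≠ ∞)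
    (hVr : ∀ x ∈ V, r ≤ g x) :
    Tendsto (fun n : ℕ => (∫ x in S, g x ^ n ∂μ) / ∫ x in T, g x ^ n ∂μ) atTop (𝓝 0) := by
  have hr : 0 < r := hM.trans_lt hMr
  have hVpos : 0 < μ.real V := ENNReal.toReal_pos hV₀ hV_top
  have hnum (n : ℕ) : ∫ x in S, g x ^ n ∂μ ≤ M ^ n * μ.real S := by
    refine (Real.le_norm_self _).trans
      (norm_setIntegral_le_of_norm_le_const hS.lt_top fun x hx => ?_)
    rw [Real.norm_of_nonneg (pow_nonneg (hg x) n)]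
    exact pow_le_pow_left₀ (hg x) (hSM x hx) n
  have hden (n : ℕ) : r ^ n * μ.real V ≤ ∫ x in T, g x ^ n ∂μ :=
    calc r ^ n * μ.real V
        ≤ ∫ x in V, g x ^ n ∂μ := setIntegral_ge_of_const_le_real hV hV_top
          (fun x hx => pow_le_pow_left₀ hr.le (hVr x hx) n) ((hgT n).mono_set hVT)
      _ ≤ ∫ x in T, g x ^ n ∂μ := setIntegral_mono_set (hgT n)
          (Eventually.of_forall fun x => pow_nonneg (hg x) n) hVT.eventuallyLE
  have hlim : Tendsto (fun n : ℕ => (M / r) ^ n * (μ.real S / μ.real V)) atTop (𝓝 0) := by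
    simpa using (tendsto_pow_atTop_nhds_zero_of_lt_one (div_nonneg hM hr.le)
      ((div_lt_one hr).mpr hMr)).mul_const (μ.real S / μ.real V)
  refine tendsto_of_tendsto_of_tendsto_of_le_of_le tendsto_const_nhds hlim (fun n => ?_) fun n => ?_
  · exact div_nonneg (integral_nonneg fun x => pow_nonneg (hg x) n)
      ((mul_nonneg (pow_nonneg hr.le n) hVpos.le).trans (hden n))
  · calc (∫ x in S, g x ^ n ∂μ) / ∫ x in T, g x ^ n ∂μ
        ≤ (M ^ n * μ.real S) / (r ^ n * μ.real V) :=
          div_le_div₀ (mul_nonneg (pow_nonneg hM n) measureReal_nonneg) (hnum n)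
            (mul_pos (pow_pos hr n) hVpos) (hden n)
      _ = (M / r) ^ n * (μ.real S / μ.real V) := by rw [div_pow, div_mul_div_comm]

end Concentration

/-- The peak function `f_ζ`. -/
def peak (ζ z : ℂ) : ℂ := (1 + conj ζ * z) / 2

section Peak

variable {ζ : ℂ}

@[fun_prop]
theorem continuous_peak : Continuous (peak ζ) := by
  unfold peak; fun_prop

theorem hasDerivAt_peak (z : ℂ) : HasDerivAt (peak ζ) (conj ζ / 2) z := by
  have := (((hasDerivAt_id z).const_mul (conj ζ)).const_add 1).div_const 2
  rwa [mul_one] at this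

theorem peak_self (hζ : ‖ζ‖ = 1) : peak ζ ζ = 1 := by
  rw [peak, mul_comm, Complex.mul_conj, Complex.normSq_eq_norm_sq, hζ]
  norm_num

theorem norm_peak_lt_one (hζ : ‖ζ‖ = 1) {z : ℂ} (hz : ‖z‖ ≤ 1) (hzζ : z ≠ ζ) :
    ‖peak ζ z‖ < 1 := by
  have hw : conj ζ * z ≠ 1 := fun h => hzζ <|
    calc z = ζ * (conj ζ * z) := by
          rw [← mul_assoc, Complex.mul_conj, Complex.normSq_eq_norm_sq, hζ]; simp
      _ = ζ := by rw [h, mul_one]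
  have := norm_combo_lt_of_ne (r := 1) (by simp) (by simpa [hζ] using hz) hw.symm
    (a := 1 / 2) (b := 1 / 2) (by norm_num) (by norm_num) (by norm_num)
  have hpeak : peak ζ z = (1 / 2 : ℝ) • 1 + (1 / 2 : ℝ) • (conj ζ * z) := by
    simp only [peak, Complex.real_smul]
    push_cast
    ring
  rwa [hpeak]

theorem sq_norm_deriv_peak_pow (hζ : ‖ζ‖ = 1) (k : ℕ) (z : ℂ) :
    ‖deriv (fun z => peak ζ z ^ k) z‖ ^ 2 = ((k : ℝ) / 2) ^ 2 * (‖peak ζ z‖ ^ 2) ^ (k - 1) := by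
  rw [((hasDerivAt_peak z).fun_pow k).deriv]
  simp only [norm_mul, norm_pow, norm_div, Complex.norm_natCast, Complex.norm_conj, hζ,
    Complex.norm_two]
  ring

theorem setIntegral_sq_norm_deriv_peak_pow (hζ : ‖ζ‖ = 1) (s : Set ℂ) (k : ℕ) :
    ∫ z in s, ‖deriv (fun z => peak ζ z ^ k) z‖ ^ 2
      = ((k : ℝ) / 2) ^ 2 * ∫ z in s, (‖peak ζ z‖ ^ 2) ^ (k - 1) := by
  simp_rw [sq_norm_deriv_peak_pow hζ]
  exact integral_const_mul _ _

theorem exists_lt_one_forall_sq_norm_peak_le (hζ : ‖ζ‖ = 1) {U : Set ℂ} (hU : IsOpen U)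
    (hζU : ζ ∈ U) : ∃ M, 0 ≤ M ∧ M < 1 ∧ ∀ z ∈ closedBall (0 : ℂ) 1 \ U, ‖peak ζ z‖ ^ 2 ≤ M := by
  obtain ⟨a, ha, hle⟩ := ((isCompact_closedBall (0 : ℂ) 1).diff hU).exists_forall_le'
    (f := fun z => -‖peak ζ z‖ ^ 2) (a := -1) (by fun_prop) fun z hz => neg_lt_neg <|
      pow_lt_one₀ (norm_nonneg _) (norm_peak_lt_one hζ (mem_closedBall_zero_iff.mp hz.1)
        fun h => hz.2 (h ▸ hζU)) two_ne_zero
  exact ⟨max (-a) 0, le_max_right _ _, max_lt (by linarith) one_pos,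
    fun z hz => (le_neg.mpr (hle z hz)).trans (le_max_left _ _)⟩

theorem volume_ball_inter_lt_sq_norm_peak_pos (hζ : ‖ζ‖ = 1) {r : ℝ} (hr : r < 1) :
    0 < volume (ball (0 : ℂ) 1 ∩ {z | r < ‖peak ζ z‖ ^ 2}) := by
  have hopen : IsOpen {z | r < ‖peak ζ z‖ ^ 2} := isOpen_lt continuous_const (by fun_prop)
  have hζ_closure : ζ ∈ closure (ball (0 : ℂ) 1) := by
    rw [closure_ball 0 one_ne_zero, mem_closedBall_zero_iff, hζ]
  refine (isOpen_ball.inter hopen).measure_pos volume ?_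
  exact mem_closure_iff.mp hζ_closure _ hopen (by simpa [peak_self hζ] using hr) |>.mono
    fun z hz => ⟨hz.2, hz.1⟩

end Peak

/-- for the peak function f_ζ(z)=(1+conj(ζ)z)/2 and f_k = f_ζ^k, for any open
neighborhood U of ζ the mass ratio ∫_{𝔻∖U}|f_k'|²dA / ∫_𝔻|f_k'|²dA tends to 0. -/
theorem stmt7 (ζ : ℂ) (hζ : ‖ζ‖ = 1)
    (U : Set ℂ) (hU : IsOpen U) (hζU : ζ ∈ U) :
    Tendsto (fun k : ℕ =>
      (∫ z in UD \ U,
        ‖deriv (fun z => ((1 + (starRingEnd ℂ) ζ * z) / 2) ^ k) z‖ ^ 2) /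
      (∫ z in UD,
        ‖deriv (fun z => ((1 + (starRingEnd ℂ) ζ * z) / 2) ^ k) z‖ ^ 2))
      atTop (nhds 0) := by
  show Tendsto (fun k : ℕ => (∫ z in UD \ U, ‖deriv (fun z => peak ζ z ^ k) z‖ ^ 2) /
    ∫ z in UD, ‖deriv (fun z => peak ζ z ^ k) z‖ ^ 2) atTop (𝓝 0)
  obtain ⟨M, hM₀, hM₁, hM⟩ := exists_lt_one_forall_sq_norm_peak_le hζ hU hζU
  have hg : Continuous fun z => ‖peak ζ z‖ ^ 2 := by fun_prop
  have hfin {s : Set ℂ} (hs : s ⊆ UD) : volume s ≠ ∞ :=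
    (measure_ball_lt_top.trans_le' (measure_mono hs)).ne
  have hconc := tendsto_setIntegral_pow_div_setIntegral_pow_atTop_zero (μ := volume)
    (S := UD \ U) (T := UD) (V := UD ∩ {z | (M + 1) / 2 < ‖peak ζ z‖ ^ 2})
    (fun z => sq_nonneg ‖peak ζ z‖)
    (fun n => ((hg.pow n).continuousOn.integrableOn_compact (isCompact_closedBall 0 1)).mono_set
      ball_subset_closedBall)
    (hfin sdiff_subset) (fun z hz => hM z ⟨ball_subset_closedBall hz.1, hz.2⟩) hM₀ (by linarith)
    (isOpen_ball.measurableSet.inter (measurableSet_lt measurable_const hg.measurable))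
    inter_subset_left (volume_ball_inter_lt_sq_norm_peak_pos hζ (by linarith)).ne'
    (hfin inter_subset_left) fun z hz => hz.2.le
  refine (hconc.comp (tendsto_sub_atTop_nat 1)).congr' ?_
  filter_upwards [eventually_ne_atTop 0] with k hk
  rw [Function.comp_apply, setIntegral_sq_norm_deriv_peak_pow hζ,
    setIntegral_sq_norm_deriv_peak_pow hζ, mul_div_mul_left _ _ (by positivity)]
end
end

section
/- Let φ : 𝔻 → 𝔻 be holomorphic such that C_φ is bounded on the Dirichlet space and its range is closed. Then 𝕋 ⊆ closure(φ(𝔻)); equivalently, for every ζ ∈ 𝕋 and every r > 0, S(ζ,r) ∩ φ(𝔻) ≠ ∅, where S(ζ,r) = {z ∈ 𝔻 : |z − ζ| < r}. -/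
open MeasureTheory Metric Complex Filter Set
open scoped ENNReal NNReal

noncomputable section

/-! If `φ(𝔻)` stayed at distance `ε` from a point `ζ` of the unit circle, then `f = (ζ - ·)⁻¹`
would satisfy `|f' ∘ φ| ≤ ε⁻²`, so the Dirichlet integral of `f ∘ φ` would be at most `ε⁻⁴` times
that of `φ`, which is finite because `C_φ` is bounded (apply it to the identity). But `f` is not in
the Dirichlet space: `|f'|² = |ζ - w|⁻⁴ ≥ (2s)⁻⁴` on the disc of radius `s / 2` about `(1 - s)ζ`,
so its Dirichlet integral is at least of order `s⁻²` for every small `s`. This contradicts the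
lower bound `‖C_φ f‖ ≥ c ‖f‖`. -/

def dirichletIntegral (f : ℂ → ℂ) : ℝ≥0∞ := ∫⁻ z in UD, (‖deriv f z‖₊ : ℝ≥0∞) ^ 2

lemma Dnorm2_eq_top_iff {f : ℂ → ℂ} : Dnorm2 f = ⊤ ↔ dirichletIntegral f = ⊤ := by
  simp [Dnorm2, dirichletIntegral, ENNReal.add_eq_top]

lemma mem_UD_iff {z : ℂ} : z ∈ UD ↔ ‖z‖ < 1 := by
  simp [UD]

lemma sub_ne_zero_of_mem_UD {ζ z : ℂ} (hζ : 1 ≤ ‖ζ‖) (hz : z ∈ UD) : ζ - z ≠ 0 := by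
  rw [sub_ne_zero]
  rintro rfl
  exact (mem_UD_iff.1 hz).not_ge hζ

lemma hasDerivAt_inv_sub {ζ z : ℂ} (h : ζ - z ≠ 0) :
    HasDerivAt (fun w => (ζ - w)⁻¹) ((ζ - z) ^ 2)⁻¹ z := by
  have := ((hasDerivAt_id z).const_sub ζ).inv h
  simp only [id, neg_neg, one_div] at this
  exact this

lemma norm_deriv_inv_sub {ζ z : ℂ} (h : ζ - z ≠ 0) :
    ‖deriv (fun w => (ζ - w)⁻¹) z‖ = ‖ζ - z‖⁻¹ ^ 2 := by
  rw [(hasDerivAt_inv_sub h).deriv, norm_inv, norm_pow, inv_pow]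

lemma ball_subset_UD {ζ : ℂ} (hζ : ‖ζ‖ = 1) {s : ℝ} (hs0 : 0 < s) (hs1 : s ≤ 1) :
    ball ((1 - s) • ζ) (s / 2) ⊆ UD := by
  intro w hw
  rw [mem_ball, dist_eq_norm] at hw
  rw [mem_UD_iff]
  calc ‖w‖ ≤ ‖w - (1 - s) • ζ‖ + ‖(1 - s) • ζ‖ := norm_le_norm_sub_add _ _
    _ < s / 2 + (1 - s) := by
        rw [norm_smul, hζ, mul_one, Real.norm_of_nonneg (by linarith)]; linarith
    _ < 1 := by linarith

lemma norm_sub_lt_of_mem_ball {ζ : ℂ} (hζ : ‖ζ‖ = 1) {s : ℝ} (hs0 : 0 < s) {w : ℂ}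
    (hw : w ∈ ball ((1 - s) • ζ) (s / 2)) : ‖ζ - w‖ < 2 * s := by
  rw [mem_ball, dist_eq_norm'] at hw
  calc ‖ζ - w‖ ≤ ‖ζ - (1 - s) • ζ‖ + ‖(1 - s) • ζ - w‖ := norm_sub_le_norm_sub_add_norm_sub _ _ _
    _ < s + s / 2 := by
        rw [show ζ - (1 - s) • ζ = s • ζ by module, norm_smul, hζ, mul_one,
          Real.norm_of_nonneg hs0.le]
        linarith
    _ ≤ 2 * s := by linarith

lemma dirichletIntegral_inv_sub_ge {ζ : ℂ} (hζ : ‖ζ‖ = 1) {s : ℝ} (hs0 : 0 < s) (hs1 : s ≤ 1) :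
    ENNReal.ofReal (3 / (64 * s ^ 2)) ≤ dirichletIntegral (fun w => (ζ - w)⁻¹) := by
  set B := ball ((1 - s) • ζ) (s / 2)
  have hbound : ∀ w ∈ B, ENNReal.ofReal ((2 * s) ^ 4)⁻¹ ≤
      (‖deriv (fun w => (ζ - w)⁻¹) w‖₊ : ℝ≥0∞) ^ 2 := by
    intro w hw
    have hne := sub_ne_zero_of_mem_UD hζ.ge (ball_subset_UD hζ hs0 hs1 hw)
    rw [← enorm_eq_nnnorm, ← ofReal_norm, ← ENNReal.ofReal_pow (norm_nonneg _),
      norm_deriv_inv_sub hne, ← pow_mul, inv_pow]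
    gcongr
    exact (norm_sub_lt_of_mem_ball hζ hs0 hw).le
  -- `(2s)⁻⁴ · π (s/2)² = π / (64 s²)`, and `π ≥ 3`
  calc ENNReal.ofReal (3 / (64 * s ^ 2))
      ≤ ENNReal.ofReal ((2 * s) ^ 4)⁻¹ * (ENNReal.ofReal (s / 2) ^ 2 * NNReal.pi) := by
        rw [← ENNReal.ofReal_pow (by positivity), ← ENNReal.ofReal_coe_nnreal, NNReal.coe_real_pi,
          ← ENNReal.ofReal_mul (by positivity), ← ENNReal.ofReal_mul (by positivity)]
        refine ENNReal.ofReal_le_ofReal ?_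
        have : ((2 * s) ^ 4)⁻¹ * ((s / 2) ^ 2 * Real.pi) = Real.pi / (64 * s ^ 2) := by
          field_simp; ring
        rw [this]
        gcongr
        exact Real.pi_gt_three.le
    _ = ∫⁻ _ in B, ENNReal.ofReal ((2 * s) ^ 4)⁻¹ := by
        rw [setLIntegral_const, Complex.volume_ball]
    _ ≤ ∫⁻ z in B, (‖deriv (fun w => (ζ - w)⁻¹) z‖₊ : ℝ≥0∞) ^ 2 :=
        setLIntegral_mono' measurableSet_ball hbound
    _ ≤ dirichletIntegral (fun w => (ζ - w)⁻¹) := lintegral_mono_set (ball_subset_UD hζ hs0 hs1)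

lemma dirichletIntegral_inv_sub_eq_top {ζ : ℂ} (hζ : ‖ζ‖ = 1) :
    dirichletIntegral (fun w => (ζ - w)⁻¹) = ⊤ := by
  refine ENNReal.eq_top_of_forall_nnreal_le fun r => ?_
  have hr : (0 : ℝ) ≤ r := r.2
  set s : ℝ := (8 * (r + 1))⁻¹
  have hs0 : 0 < s := by positivity
  have hs1 : s ≤ 1 := inv_le_one_of_one_le₀ (by linarith)
  refine le_trans ?_ (dirichletIntegral_inv_sub_ge hζ hs0 hs1)
  rw [← ENNReal.ofReal_coe_nnreal]
  refine ENNReal.ofReal_le_ofReal ?_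
  have : 3 / (64 * s ^ 2) = 3 * (r + 1) ^ 2 := by
    simp only [s]; field_simp; ring
  rw [this]
  nlinarith

lemma differentiableOn_inv_sub {ζ : ℂ} (hζ : 1 ≤ ‖ζ‖) :
    DifferentiableOn ℂ (fun w => (ζ - w)⁻¹) UD := fun _ hz =>
  (hasDerivAt_inv_sub (sub_ne_zero_of_mem_UD hζ hz)).differentiableAt.differentiableWithinAt

lemma norm_deriv_inv_sub_le {ζ z : ℂ} {ε : ℝ} (hε : 0 < ε) (h : ε ≤ ‖ζ - z‖) :
    ‖deriv (fun w => (ζ - w)⁻¹) z‖ ≤ ε⁻¹ ^ 2 := by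
  rw [norm_deriv_inv_sub (norm_pos_iff.1 (hε.trans_le h))]
  gcongr

lemma Dnorm2_id_ne_top : Dnorm2 id ≠ ⊤ := by
  simp [Dnorm2_eq_top_iff, dirichletIntegral, UD]

lemma dirichletIntegral_comp_le {f φ : ℂ → ℂ} {K : ℝ} (hφ : DifferentiableOn ℂ φ UD)
    (hf : ∀ z ∈ UD, DifferentiableAt ℂ f (φ z)) (hK : ∀ z ∈ UD, ‖deriv f (φ z)‖ ≤ K) :
    dirichletIntegral (f ∘ φ) ≤ ENNReal.ofReal K ^ 2 * dirichletIntegral φ := by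
  rw [dirichletIntegral, dirichletIntegral, ← lintegral_const_mul' _ _ (by simp)]
  refine setLIntegral_mono' measurableSet_ball fun z hz => ?_
  have hφz : DifferentiableAt ℂ φ z := hφ.differentiableAt (isOpen_ball.mem_nhds hz)
  rw [← mul_pow, deriv_comp z (hf z hz) hφz, nnnorm_mul, ENNReal.coe_mul]
  gcongr
  rw [← enorm_eq_nnnorm, ← ofReal_norm]
  exact ENNReal.ofReal_le_ofReal (hK z hz)

lemma exists_le_norm_sub_of_notMem_closure {φ : ℂ → ℂ} {s : Set ℂ} {ζ : ℂ}
    (h : ζ ∉ closure (φ '' s)) : ∃ ε > 0, ∀ z ∈ s, ε ≤ ‖ζ - φ z‖ := by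
  rw [Metric.mem_closure_iff] at h
  push Not at h
  obtain ⟨ε, hε, hsep⟩ := h
  exact ⟨ε, hε, fun z hz => by simpa [dist_eq_norm] using hsep _ ⟨z, hz, rfl⟩⟩

theorem stmt9_general (φ : ℂ → ℂ) (hφ : DifferentiableOn ℂ φ UD)
    (M : ℝ)
    (hbdd : ∀ f : ℂ → ℂ, DifferentiableOn ℂ f UD →
      Dnorm2 (f ∘ φ) ≤ ENNReal.ofReal M * Dnorm2 f)
    (hclosed : ∃ c : ℝ, 0 < c ∧ ∀ f : ℂ → ℂ, DifferentiableOn ℂ f UD →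
      ENNReal.ofReal c * Dnorm2 f ≤ Dnorm2 (f ∘ φ)) :
    ∀ ζ : ℂ, ‖ζ‖ = 1 → ζ ∈ closure (φ '' UD) := by
  intro ζ hζ
  by_contra hζφ
  obtain ⟨ε, hε, hsep⟩ := exists_le_norm_sub_of_notMem_closure hζφ
  obtain ⟨c, hc, hlow⟩ := hclosed
  have hφ_fin : dirichletIntegral φ ≠ ⊤ := Dnorm2_eq_top_iff.not.1 <|
    ne_top_of_le_ne_top (by finiteness [Dnorm2_id_ne_top]) (hbdd id differentiableOn_id)
  have hcomp_fin : dirichletIntegral ((fun w => (ζ - w)⁻¹) ∘ φ) ≠ ⊤ :=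
    ne_top_of_le_ne_top (by finiteness) <| dirichletIntegral_comp_le hφ
      (fun z hz => (hasDerivAt_inv_sub (norm_pos_iff.1 (hε.trans_le (hsep z hz)))).differentiableAt)
      (fun z hz => norm_deriv_inv_sub_le hε (hsep z hz))
  have hlow_f := hlow _ (differentiableOn_inv_sub hζ.ge)
  rw [Dnorm2_eq_top_iff.2 (dirichletIntegral_inv_sub_eq_top hζ),
    ENNReal.mul_top (ENNReal.ofReal_pos.2 hc).ne', top_le_iff] at hlow_f
  exact hcomp_fin (Dnorm2_eq_top_iff.1 hlow_f)

/-- if C_φ is bounded on the Dirichlet space and has closed range (equivalently,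
since C_φ is injective, C_φ is bounded below: ∃ c > 0 with ‖C_φ f‖² ≥ c‖f‖² for all f), then
𝕋 ⊆ closure(φ(𝔻)). -/
theorem stmt9 (φ : ℂ → ℂ) (hφ : DifferentiableOn ℂ φ UD) (hmaps : MapsTo φ UD UD)
    (M : ℝ) (hM : 0 < M)
    (hbdd : ∀ f : ℂ → ℂ, DifferentiableOn ℂ f UD →
      Dnorm2 (f ∘ φ) ≤ ENNReal.ofReal M * Dnorm2 f)
    (hclosed : ∃ c : ℝ, 0 < c ∧ ∀ f : ℂ → ℂ, DifferentiableOn ℂ f UD →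
      ENNReal.ofReal c * Dnorm2 f ≤ Dnorm2 (f ∘ φ)) :
    ∀ ζ : ℂ, ‖ζ‖ = 1 → ζ ∈ closure (φ '' UD) :=
  stmt9_general φ hφ M hbdd hclosed
end
end

section
/- Let φ : 𝔻 → 𝔻 be holomorphic, α ∈ (0,1), and suppose there are constants M > 0 and δ > 0 and r > 0 such that ∫_{D(z,r)} n_φ dA ≤ M·A(D(z,r)) for all z ∈ 𝔻 and ∫_{φ(𝔻) ∩ D(z,r)} n_φ^α dA ≥ δ·A(D(z,r)) for all z ∈ 𝔻. Then there exists δ' > 0 such that A(φ(𝔻) ∩ D(z,r)) ≥ δ'·A(D(z,r)) for all z ∈ 𝔻. -/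
open MeasureTheory Metric Complex Filter Set
open scoped ENNReal NNReal

noncomputable section

namespace NNReal

theorem rpow_le_rpow_add_rpow_sub_one_mul (x : ℝ≥0) {t : ℝ≥0} (ht : 0 < t) {α : ℝ}
    (hα0 : 0 ≤ α) (hα1 : α ≤ 1) : x ^ α ≤ t ^ α + t ^ (α - 1) * x := by
  rcases le_or_gt x t with hxt | htx
  · exact le_add_right (rpow_le_rpow hxt hα0)
  · calc x ^ α = x ^ (α - 1) * x := by rw [← rpow_add_one (ht.trans htx).ne', sub_add_cancel]
      _ ≤ t ^ (α - 1) * x :=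
        mul_le_mul_left (rpow_le_rpow_of_nonpos ht htx.le (sub_nonpos.2 hα1)) x
      _ ≤ _ := le_add_self

theorem exists_pos_mul_rpow_le (M : ℝ≥0) {ε : ℝ≥0} (hε : 0 < ε) {β : ℝ} (hβ : β < 0) :
    ∃ t : ℝ≥0, 0 < t ∧ M * t ^ β ≤ ε := by
  obtain ⟨t, hMt, ht⟩ := (((tendsto_rpow_atTop (neg_pos.2 hβ)).eventually_ge_atTop (M / ε)).and
    (eventually_gt_atTop 0)).exists
  refine ⟨t, ht, ?_⟩
  rw [← neg_neg β, rpow_neg, ← div_eq_mul_inv, div_le_iff₀ (rpow_pos ht), mul_comm ε]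
  exact (div_le_iff₀ hε).1 hMt

end NNReal

namespace MeasureTheory

variable {X : Type*} [MeasurableSpace X] (μ : Measure X)

theorem setLIntegral_rpow_le (f : X → ℝ≥0) (s : Set X) {t : ℝ≥0} (ht : 0 < t) {α : ℝ}
    (hα0 : 0 ≤ α) (hα1 : α ≤ 1) :
    ∫⁻ x in s, (f x : ℝ≥0∞) ^ α ∂μ
      ≤ ↑(t ^ α) * μ s + ↑(t ^ (α - 1)) * ∫⁻ x in s, (f x : ℝ≥0∞) ∂μ :=
  calc ∫⁻ x in s, (f x : ℝ≥0∞) ^ α ∂μ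
      ≤ ∫⁻ x in s, (↑(t ^ α) + ↑(t ^ (α - 1)) * (f x : ℝ≥0∞)) ∂μ := by
        refine lintegral_mono fun x => ?_
        rw [← ENNReal.coe_rpow_of_nonneg _ hα0, ← ENNReal.coe_mul, ← ENNReal.coe_add]
        exact ENNReal.coe_le_coe.2 ((f x).rpow_le_rpow_add_rpow_sub_one_mul ht hα0 hα1)
    _ = ↑(t ^ α) * μ s + ↑(t ^ (α - 1)) * ∫⁻ x in s, (f x : ℝ≥0∞) ∂μ := by
        rw [lintegral_add_left measurable_const, setLIntegral_const,
          lintegral_const_mul' _ _ ENNReal.coe_ne_top]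

theorem exists_pos_mul_measure_le_of_lintegral_rpow {α : ℝ} (hα0 : 0 ≤ α) (hα1 : α < 1)
    (M : ℝ≥0) {δ : ℝ≥0} (hδ : 0 < δ) :
    ∃ c : ℝ≥0, 0 < c ∧ ∀ (f : X → ℝ≥0) (s b : Set X), μ b ≠ ∞ →
      ∫⁻ x in s, (f x : ℝ≥0∞) ∂μ ≤ M * μ b → δ * μ b ≤ ∫⁻ x in s, (f x : ℝ≥0∞) ^ α ∂μ →
      c * μ b ≤ μ s := by
  obtain ⟨t, ht, hMt⟩ := NNReal.exists_pos_mul_rpow_le M (half_pos hδ) (sub_neg.2 hα1)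
  have htα : t ^ α ≠ 0 := (NNReal.rpow_pos ht).ne'
  refine ⟨δ / 2 / t ^ α, div_pos (half_pos hδ) (NNReal.rpow_pos ht), ?_⟩
  intro f s b hb hup hlow
  have hsplit :
      (δ / 2 : ℝ≥0) * μ b + (δ / 2 : ℝ≥0) * μ b ≤ ↑(t ^ α) * μ s + (δ / 2 : ℝ≥0) * μ b :=
    calc (δ / 2 : ℝ≥0) * μ b + (δ / 2 : ℝ≥0) * μ b = δ * μ b := by
          rw [← add_mul, ← ENNReal.coe_add, add_halves]
      _ ≤ ∫⁻ x in s, (f x : ℝ≥0∞) ^ α ∂μ := hlow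
      _ ≤ ↑(t ^ α) * μ s + ↑(t ^ (α - 1)) * ∫⁻ x in s, (f x : ℝ≥0∞) ∂μ :=
          setLIntegral_rpow_le μ f s ht hα0 hα1.le
      _ ≤ ↑(t ^ α) * μ s + ↑(t ^ (α - 1)) * (M * μ b) := by gcongr
      _ ≤ ↑(t ^ α) * μ s + (δ / 2 : ℝ≥0) * μ b := by
          rw [← mul_assoc, ← ENNReal.coe_mul, mul_comm _ M]
          gcongr
  have hhalf := ENNReal.le_of_add_le_add_right (ENNReal.mul_ne_top ENNReal.coe_ne_top hb) hsplit
  rw [ENNReal.coe_div htα, div_eq_mul_inv, mul_right_comm, ← div_eq_mul_inv]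
  exact ENNReal.div_le_of_le_mul' hhalf

end MeasureTheory

theorem stmt11_general (φ : ℂ → ℂ)
    (α M δ r : ℝ) (hα0 : 0 < α) (hα1 : α < 1) (hδ : 0 < δ)
    (hup : ∀ z ∈ UD, (∫⁻ w in bergmanBall z r, (countFn φ w : ℝ≥0∞))
      ≤ ENNReal.ofReal M * volume (bergmanBall z r))
    (hlow : ∀ z ∈ UD, ENNReal.ofReal δ * volume (bergmanBall z r)
      ≤ ∫⁻ w in φ '' UD ∩ bergmanBall z r, (countFn φ w : ℝ≥0∞) ^ α) :
    ∃ δ' : ℝ, 0 < δ' ∧ ∀ z ∈ UD,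
      ENNReal.ofReal δ' * volume (bergmanBall z r) ≤ volume (φ '' UD ∩ bergmanBall z r) := by
  obtain ⟨c, hc, hmeasure⟩ := exists_pos_mul_measure_le_of_lintegral_rpow (volume : Measure ℂ)
    hα0.le hα1 M.toNNReal (Real.toNNReal_pos.2 hδ)
  refine ⟨c, hc, fun z hz => ?_⟩
  have hfin : volume (bergmanBall z r) ≠ ∞ :=
    ((measure_mono fun _ hw => hw.1).trans_lt measure_ball_lt_top).ne
  rw [ENNReal.ofReal_coe_nnreal]
  refine hmeasure (fun w => (countFn φ w : ℝ≥0)) _ _ hfin ?_ ?_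
  all_goals simp only [ENNReal.coe_natCast]
  · exact (lintegral_mono_set inter_subset_right).trans (hup z hz)
  · exact hlow z hz

/-- from ∫_{D(z,r)} n_φ dA ≤ M·A(D(z,r)) and
∫_{φ(𝔻)∩D(z,r)} n_φ^α dA ≥ δ·A(D(z,r)) for all z, the area condition
A(φ(𝔻)∩D(z,r)) ≥ δ'·A(D(z,r)) follows for some δ' > 0. -/
theorem stmt11 (φ : ℂ → ℂ) (hφ : DifferentiableOn ℂ φ UD) (hmaps : MapsTo φ UD UD)
    (α M δ r : ℝ) (hα0 : 0 < α) (hα1 : α < 1) (hM : 0 < M) (hδ : 0 < δ) (hr : 0 < r)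
    (hup : ∀ z ∈ UD, (∫⁻ w in bergmanBall z r, (countFn φ w : ℝ≥0∞))
      ≤ ENNReal.ofReal M * volume (bergmanBall z r))
    (hlow : ∀ z ∈ UD, ENNReal.ofReal δ * volume (bergmanBall z r)
      ≤ ∫⁻ w in φ '' UD ∩ bergmanBall z r, (countFn φ w : ℝ≥0∞) ^ α) :
    ∃ δ' : ℝ, 0 < δ' ∧ ∀ z ∈ UD,
      ENNReal.ofReal δ' * volume (bergmanBall z r) ≤ volume (φ '' UD ∩ bergmanBall z r) :=
  stmt11_general φ α M δ r hα0 hα1 hδ hup hlow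
end
end

section
/- Let φ : 𝔻 → 𝔻 be holomorphic with C_φ bounded on the Dirichlet space, and suppose sup over f in the unit sphere of D(𝔻) of ∫_{φ(𝔻) ∩ {n_φ > k}} |f'(w)|² n_φ(w) dA(w) → 0 as k → ∞. If n_φ dA is a reverse Carleson measure (there exist δ, r > 0 with ∫_{φ(𝔻)∩D(z,r)} n_φ dA ≥ δ·A(D(z,r)) for all z ∈ 𝔻), then there exist δ', r > 0 with A(φ(𝔻) ∩ D(z,r)) ≥ δ'·A(D(z,r)) for all z ∈ 𝔻. -/
open MeasureTheory Metric Complex Filter Set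
open scoped ENNReal NNReal

noncomputable section

/-!
Test the tail hypothesis against `f_z(w) = w / (1 - z̄w)`, a primitive of the Bergman
kernel. By the area formula `‖f_z‖²` is the area of `f_z(𝔻) ⊆ D(0, (1 - |z|)⁻¹)`, so
`‖f_z‖² ≲ (1 - |z|)⁻²`, while `|f_z'|² ≳ (1 - |z|)⁻⁴` on `D(z, r)` and
`A(D(z, r)) ≳ (1 - |z|)²`. Splitting `∫_{φ(𝔻) ∩ D(z,r)} n_φ dA` at the level `k`, the part
where `n_φ ≤ k` is at most `k · A(φ(𝔻) ∩ D(z, r))`, and the part where `n_φ > k` is at most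
`C_r · A(D(z, r))` times the tail. For `k` large this is half of the reverse Carleson
bound, which leaves `A(φ(𝔻) ∩ D(z, r)) ≥ δ / (2k) · A(D(z, r))`.
-/

open scoped ComplexConjugate

lemma mem_UD {w : ℂ} : w ∈ UD ↔ ‖w‖ < 1 := mem_ball_zero_iff

lemma norm_one_sub_conj_mul_sq_sub_norm_sub_sq (z w : ℂ) :
    ‖1 - conj z * w‖ ^ 2 - ‖z - w‖ ^ 2 = (1 - ‖z‖ ^ 2) * (1 - ‖w‖ ^ 2) := by
  simp only [Complex.sq_norm, Complex.normSq_apply, sub_re, sub_im, mul_re, mul_im, conj_re,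
    conj_im, one_re, one_im]
  ring

lemma one_sub_norm_le_norm_one_sub_conj_mul (z : ℂ) {w : ℂ} (hw : ‖w‖ ≤ 1) :
    1 - ‖z‖ ≤ ‖1 - conj z * w‖ :=
  calc 1 - ‖z‖ ≤ 1 - ‖conj z * w‖ := by
        rw [norm_mul, Complex.norm_conj]
        linarith [mul_le_of_le_one_right (norm_nonneg z) hw]
    _ ≤ ‖1 - conj z * w‖ := by simpa using norm_sub_norm_le (1 : ℂ) (conj z * w)

lemma norm_one_sub_conj_mul_pos {z w : ℂ} (hz : z ∈ UD) (hw : ‖w‖ ≤ 1) :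
    0 < ‖1 - conj z * w‖ :=
  (sub_pos.mpr (mem_UD.mp hz)).trans_le (one_sub_norm_le_norm_one_sub_conj_mul z hw)

lemma one_sub_conj_mul_ne_zero {z w : ℂ} (hz : z ∈ UD) (hw : w ∈ UD) : 1 - conj z * w ≠ 0 :=
  norm_pos_iff.mp (norm_one_sub_conj_mul_pos hz (mem_UD.mp hw).le)

lemma norm_sub_lt_norm_one_sub_conj_mul {z w : ℂ} (hz : z ∈ UD) (hw : w ∈ UD) :
    ‖z - w‖ < ‖1 - conj z * w‖ := by
  have hz1 := mem_UD.mp hz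
  have hw1 := mem_UD.mp hw
  have hprod : 0 < (1 - ‖z‖ ^ 2) * (1 - ‖w‖ ^ 2) := by
    apply mul_pos <;> nlinarith [norm_nonneg z, norm_nonneg w]
  rw [← norm_one_sub_conj_mul_sq_sub_norm_sub_sq] at hprod
  exact lt_of_pow_lt_pow_left₀ 2 (norm_nonneg _) (by linarith)

lemma rho_lt_iff {z w : ℂ} (hz : z ∈ UD) (hw : w ∈ UD) {s : ℝ} :
    rho z w < s ↔ ‖z - w‖ < s * ‖1 - conj z * w‖ := by
  rw [rho, norm_div, div_lt_iff₀ (norm_one_sub_conj_mul_pos hz (mem_UD.mp hw).le)]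

lemma mem_bergmanBall_iff {z w : ℂ} {r : ℝ} (hz : z ∈ UD) :
    w ∈ bergmanBall z r ↔ w ∈ UD ∧ ‖z - w‖ < Real.tanh r * ‖1 - conj z * w‖ := by
  refine and_congr_right fun hw => ?_
  have hρ0 : 0 ≤ rho z w := norm_nonneg _
  have hρ : rho z w ∈ Ioo (-1) 1 :=
    ⟨by linarith,
      (rho_lt_iff hz hw).mpr (by simpa using norm_sub_lt_norm_one_sub_conj_mul hz hw)⟩
  rw [← rho_lt_iff hz hw, ← Real.artanh_eq_half_log (Ioo_subset_Icc_self hρ),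
    ← Real.artanh_lt_artanh_iff hρ ⟨Real.neg_one_lt_tanh r, Real.tanh_lt_one r⟩,
    Real.artanh_tanh]

lemma bergmanBall_subset_UD (z : ℂ) (r : ℝ) : bergmanBall z r ⊆ UD := fun _ hw => hw.1

lemma measurableSet_bergmanBall (z : ℂ) (r : ℝ) : MeasurableSet (bergmanBall z r) := by
  have : Measurable fun w => 1 / 2 * Real.log ((1 + rho z w) / (1 - rho z w)) := by
    unfold rho; fun_prop
  exact measurableSet_ball.inter (measurableSet_lt this measurable_const)

lemma Real.tanh_pos {r : ℝ} (hr : 0 < r) : 0 < Real.tanh r := by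
  rw [Real.tanh_eq_sinh_div_cosh]
  exact div_pos (Real.sinh_pos_iff.mpr hr) (Real.cosh_pos r)

lemma ball_subset_bergmanBall {z : ℂ} (hz : z ∈ UD) (r : ℝ) :
    ball z (Real.tanh r * (1 - ‖z‖)) ⊆ bergmanBall z r := by
  intro w hw
  rw [mem_ball, dist_eq_norm] at hw
  have hz1 := mem_UD.mp hz
  have hs : 0 < Real.tanh r := pos_of_mul_pos_left ((norm_nonneg _).trans_lt hw) (by linarith)
  have hw1 : ‖w‖ < 1 :=
    calc ‖w‖ ≤ ‖z‖ + ‖w - z‖ := by simpa using norm_add_le z (w - z)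
      _ < ‖z‖ + 1 * (1 - ‖z‖) := by
        gcongr; exact hw.trans_le (by gcongr; exact (Real.tanh_lt_one r).le)
      _ = 1 := by ring
  refine (mem_bergmanBall_iff hz).mpr ⟨mem_UD.mpr hw1, ?_⟩
  calc ‖z - w‖ = ‖w - z‖ := norm_sub_rev _ _
    _ < Real.tanh r * (1 - ‖z‖) := hw
    _ ≤ Real.tanh r * ‖1 - conj z * w‖ := by
        gcongr; exact one_sub_norm_le_norm_one_sub_conj_mul z hw1.le

lemma volume_bergmanBall_ge {z : ℂ} (hz : z ∈ UD) (r : ℝ) :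
    ENNReal.ofReal (Real.tanh r * (1 - ‖z‖)) ^ 2 * NNReal.pi ≤ volume (bergmanBall z r) :=
  Complex.volume_ball z _ ▸ measure_mono (ball_subset_bergmanBall hz r)

lemma volume_bergmanBall_ne_top (z : ℂ) (r : ℝ) : volume (bergmanBall z r) ≠ ⊤ :=
  ne_top_of_le_ne_top (by simp [UD]) (measure_mono (bergmanBall_subset_UD z r))

lemma norm_one_sub_conj_mul_le {z w : ℂ} {r : ℝ} (hz : z ∈ UD) (hw : w ∈ bergmanBall z r) :
    (1 - Real.tanh r) * ‖1 - conj z * w‖ ≤ 2 * (1 - ‖z‖) := by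
  obtain ⟨-, hzw⟩ := (mem_bergmanBall_iff hz).mp hw
  have hz1 := mem_UD.mp hz
  have hzz : ‖1 - conj z * z‖ = 1 - ‖z‖ ^ 2 := by
    rw [Complex.conj_mul', ← ofReal_pow, ← ofReal_one, ← ofReal_sub, norm_real,
      Real.norm_eq_abs, abs_of_nonneg (by nlinarith [norm_nonneg z])]
  have htri : ‖1 - conj z * w‖ ≤ (1 - ‖z‖ ^ 2) + ‖z‖ * ‖z - w‖ := by
    calc ‖1 - conj z * w‖ = ‖(1 - conj z * z) + conj z * (z - w)‖ := by ring_nf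
      _ ≤ ‖1 - conj z * z‖ + ‖conj z * (z - w)‖ := norm_add_le _ _
      _ = (1 - ‖z‖ ^ 2) + ‖z‖ * ‖z - w‖ := by rw [hzz, norm_mul, Complex.norm_conj]
  nlinarith [norm_nonneg z, norm_nonneg (z - w)]

lemma det_restrictScalars_smulRight_one (c : ℂ) :
    ((ContinuousLinearMap.smulRight (1 : ℂ →L[ℂ] ℂ) c).restrictScalars ℝ).det = ‖c‖ ^ 2 := by
  simp [ContinuousLinearMap.det, LinearMap.det_restrictScalars, Algebra.norm_complex_apply,
    Complex.normSq_eq_norm_sq]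

lemma lintegral_nnnorm_deriv_sq_eq_volume_image {f : ℂ → ℂ} {s : Set ℂ} (hs : IsOpen s)
    (hf : DifferentiableOn ℂ f s) (hinj : InjOn f s) :
    ∫⁻ w in s, (‖deriv f w‖₊ : ℝ≥0∞) ^ 2 = volume (f '' s) := by
  have hderiv : ∀ w ∈ s, HasFDerivWithinAt f
      ((ContinuousLinearMap.smulRight (1 : ℂ →L[ℂ] ℂ) (deriv f w)).restrictScalars ℝ) s w :=
    fun w hw => ((hf.differentiableAt (hs.mem_nhds hw)).hasDerivAt.hasFDerivAt
      |>.restrictScalars ℝ).hasFDerivWithinAt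
  rw [← setLIntegral_one, lintegral_image_eq_lintegral_abs_det_fderiv_mul volume
    hs.measurableSet hderiv hinj]
  refine setLIntegral_congr_fun hs.measurableSet fun w _ => ?_
  rw [det_restrictScalars_smulRight_one, mul_one, abs_of_nonneg (by positivity),
    ENNReal.ofReal_pow (norm_nonneg _), ofReal_norm, enorm_eq_nnnorm]

lemma isOpen_UD : IsOpen UD := isOpen_ball

lemma image_UD_eq_singleton_or_isOpen {f : ℂ → ℂ} (hf : DifferentiableOn ℂ f UD) :
    (∃ v, f '' UD = {v}) ∨ IsOpen (f '' UD) := by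
  refine ((hf.analyticOnNhd isOpen_UD).is_constant_or_isOpen
    (convex_ball (0 : ℂ) 1).isPreconnected).imp (fun ⟨v, hv⟩ => ⟨v, ?_⟩)
    (fun h => h UD subset_rfl isOpen_UD)
  exact (Set.Nonempty.image f ⟨0, mem_ball_self one_pos⟩).subset_singleton_iff.mp
    (image_subset_iff.mpr hv)

lemma measurableSet_image_UD {f : ℂ → ℂ} (hf : DifferentiableOn ℂ f UD) :
    MeasurableSet (f '' UD) := by
  rcases image_UD_eq_singleton_or_isOpen hf with ⟨v, hv⟩ | hopen
  · exact hv ▸ measurableSet_singleton v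
  · exact hopen.measurableSet

lemma isOpen_image_UD {f : ℂ → ℂ} (hf : DifferentiableOn ℂ f UD) (hinj : InjOn f UD) :
    IsOpen (f '' UD) := by
  refine (image_UD_eq_singleton_or_isOpen hf).resolve_left fun ⟨v, hv⟩ => ?_
  have h0 : (0 : ℂ) ∈ UD := mem_UD.mpr (by simp)
  have h1 : (1 / 2 : ℂ) ∈ UD := mem_UD.mpr (by norm_num)
  have := hinj h0 h1 ((hv ▸ mem_image_of_mem f h0).trans (hv ▸ mem_image_of_mem f h1).symm)
  norm_num at this

/-- A primitive of the Bergman kernel `(1 - z̄w)⁻²` of the disc. -/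
def kernelPrimitive (z w : ℂ) : ℂ := w / (1 - conj z * w)

lemma hasDerivAt_kernelPrimitive {z w : ℂ} (hw : 1 - conj z * w ≠ 0) :
    HasDerivAt (kernelPrimitive z) (((1 - conj z * w) ^ 2)⁻¹) w := by
  have hden : HasDerivAt (fun w => 1 - conj z * w) (-conj z) w := by
    simpa using ((hasDerivAt_id w).const_mul (conj z)).const_sub 1
  have h := (hasDerivAt_id' w).div hden hw
  rwa [show 1 * (1 - conj z * w) - w * -conj z = 1 by ring, one_div] at h

lemma differentiableOn_kernelPrimitive {z : ℂ} (hz : z ∈ UD) :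
    DifferentiableOn ℂ (kernelPrimitive z) UD := fun _ hw =>
  (hasDerivAt_kernelPrimitive (one_sub_conj_mul_ne_zero hz hw)).differentiableAt
    |>.differentiableWithinAt

lemma injOn_kernelPrimitive {z : ℂ} (hz : z ∈ UD) : InjOn (kernelPrimitive z) UD := by
  intro w hw w' hw' h
  rw [kernelPrimitive, kernelPrimitive, div_eq_div_iff (one_sub_conj_mul_ne_zero hz hw)
    (one_sub_conj_mul_ne_zero hz hw')] at h
  linear_combination h

lemma norm_kernelPrimitive_lt {z w : ℂ} (hz : z ∈ UD) (hw : w ∈ UD) :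
    ‖kernelPrimitive z w‖ < 1 / (1 - ‖z‖) := by
  have hw1 := mem_UD.mp hw
  rw [kernelPrimitive, norm_div]
  exact div_lt_div₀ hw1 (one_sub_norm_le_norm_one_sub_conj_mul z hw1.le) zero_le_one
    (sub_pos.mpr (mem_UD.mp hz))

lemma Dnorm2_kernelPrimitive_eq {z : ℂ} (hz : z ∈ UD) :
    Dnorm2 (kernelPrimitive z) = volume (kernelPrimitive z '' UD) := by
  rw [Dnorm2, lintegral_nnnorm_deriv_sq_eq_volume_image isOpen_UD
    (differentiableOn_kernelPrimitive hz) (injOn_kernelPrimitive hz)]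
  simp [kernelPrimitive]

lemma Dnorm2_kernelPrimitive_le {z : ℂ} (hz : z ∈ UD) :
    Dnorm2 (kernelPrimitive z) ≤ ENNReal.ofReal (1 / (1 - ‖z‖)) ^ 2 * NNReal.pi := by
  rw [Dnorm2_kernelPrimitive_eq hz, ← Complex.volume_ball 0]
  exact measure_mono (image_subset_iff.mpr fun w hw =>
    mem_ball_zero_iff.mpr (norm_kernelPrimitive_lt hz hw))

lemma Dnorm2_kernelPrimitive_ne_zero {z : ℂ} (hz : z ∈ UD) :
    Dnorm2 (kernelPrimitive z) ≠ 0 := by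
  rw [Dnorm2_kernelPrimitive_eq hz]
  exact (isOpen_image_UD (differentiableOn_kernelPrimitive hz) (injOn_kernelPrimitive hz)
    |>.measure_pos volume ((nonempty_ball.mpr one_pos).image _)).ne'

lemma le_nnnorm_deriv_kernelPrimitive_sq {z w : ℂ} {r : ℝ} (hz : z ∈ UD)
    (hw : w ∈ bergmanBall z r) :
    ENNReal.ofReal ((1 - Real.tanh r) / (2 * (1 - ‖z‖))) ^ 4
      ≤ (‖deriv (kernelPrimitive z) w‖₊ : ℝ≥0∞) ^ 2 := by
  have hd := norm_one_sub_conj_mul_pos hz (mem_UD.mp hw.1).le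
  have ha : 0 < 1 - ‖z‖ := sub_pos.mpr (mem_UD.mp hz)
  have hs : 0 < 1 - Real.tanh r := sub_pos.mpr (Real.tanh_lt_one r)
  rw [(hasDerivAt_kernelPrimitive (one_sub_conj_mul_ne_zero hz hw.1)).deriv, ← enorm_eq_nnnorm,
    ← ofReal_norm, norm_inv, norm_pow, ← inv_pow, ← ENNReal.ofReal_pow (by positivity),
    ← ENNReal.ofReal_pow (by positivity), ← pow_mul]
  refine ENNReal.ofReal_le_ofReal (pow_le_pow_left₀ (by positivity) ?_ 4)
  rw [div_le_iff₀ (by positivity), ← div_eq_inv_mul, le_div_iff₀ hd]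
  exact norm_one_sub_conj_mul_le hz hw

lemma Dnorm2_const_mul (c : ℂ) (f : ℂ → ℂ) :
    Dnorm2 (fun w => c * f w) = (‖c‖₊ : ℝ≥0∞) ^ 2 * Dnorm2 f := by
  simp only [Dnorm2, deriv_const_mul_field, nnnorm_mul, ENNReal.coe_mul, mul_pow]
  rw [lintegral_const_mul' _ _ (by simp), mul_add]

lemma exists_nnnorm_sq_eq {x : ℝ≥0∞} (hx : x ≠ ⊤) : ∃ c : ℂ, (‖c‖₊ : ℝ≥0∞) ^ 2 = x :=
  ⟨(√x.toReal : ℂ), by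
    rw [← enorm_eq_nnnorm, ← ofReal_norm, norm_real, Real.norm_of_nonneg (Real.sqrt_nonneg _),
      ← ENNReal.ofReal_pow (Real.sqrt_nonneg _), Real.sq_sqrt ENNReal.toReal_nonneg,
      ENNReal.ofReal_toReal hx]⟩

lemma setLIntegral_nnnorm_deriv_sq_mul_le (S : Set ℂ) (ν : ℂ → ℝ≥0∞) {f : ℂ → ℂ}
    (hf : DifferentiableOn ℂ f UD) (h0 : Dnorm2 f ≠ 0) (htop : Dnorm2 f ≠ ⊤) :
    ∫⁻ w in S, (‖deriv f w‖₊ : ℝ≥0∞) ^ 2 * ν w ≤ Dnorm2 f *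
      ⨆ (g : ℂ → ℂ) (_ : DifferentiableOn ℂ g UD ∧ Dnorm2 g = 1),
        ∫⁻ w in S, (‖deriv g w‖₊ : ℝ≥0∞) ^ 2 * ν w := by
  obtain ⟨c, hc⟩ := exists_nnnorm_sq_eq (ENNReal.inv_ne_top.mpr h0)
  have hg : DifferentiableOn ℂ (fun w => c * f w) UD ∧ Dnorm2 (fun w => c * f w) = 1 :=
    ⟨hf.const_mul c, by rw [Dnorm2_const_mul, hc, ENNReal.inv_mul_cancel h0 htop]⟩
  calc ∫⁻ w in S, (‖deriv f w‖₊ : ℝ≥0∞) ^ 2 * ν w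
      = ∫⁻ w in S, Dnorm2 f * ((‖deriv (fun w => c * f w) w‖₊ : ℝ≥0∞) ^ 2 * ν w) := by
        refine lintegral_congr fun w => ?_
        rw [deriv_const_mul_field, nnnorm_mul, ENNReal.coe_mul, mul_pow, hc, ← mul_assoc,
          ← mul_assoc, ENNReal.mul_inv_cancel h0 htop, one_mul]
    _ = Dnorm2 f * ∫⁻ w in S, (‖deriv (fun w => c * f w) w‖₊ : ℝ≥0∞) ^ 2 * ν w :=
        lintegral_const_mul' _ _ htop
    _ ≤ _ := by
        gcongr
        exact le_iSup₂ (f := fun (g : ℂ → ℂ) (_ : DifferentiableOn ℂ g UD ∧ Dnorm2 g = 1) =>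
          ∫⁻ w in S, (‖deriv g w‖₊ : ℝ≥0∞) ^ 2 * ν w) _ hg

lemma setLIntegral_le_mul_measure_add_tail {α : Type*} [MeasurableSpace α] {μ : Measure α}
    {A B : Set α} (hA : MeasurableSet A) (hB : MeasurableSet B) (n : α → ℕ) (h : α → ℝ≥0∞)
    (k : ℕ) {L : ℝ≥0∞} (hL0 : L ≠ 0) (hLtop : L ≠ ⊤) (hLh : ∀ w ∈ B, L ≤ h w) :
    ∫⁻ w in A ∩ B, (n w : ℝ≥0∞) ∂μ
      ≤ k * μ (A ∩ B) + L⁻¹ * ∫⁻ w in A ∩ {w | k < n w}, h w * n w ∂μ := by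
  set T := {w | k < n w}
  have hpt : ∀ w ∈ A ∩ B, (n w : ℝ≥0∞) ≤ k + L⁻¹ * T.indicator (fun w => h w * n w) w := by
    intro w hw
    by_cases hT : w ∈ T
    · rw [indicator_of_mem hT]
      calc (n w : ℝ≥0∞) = L⁻¹ * (L * n w) := by
            rw [← mul_assoc, ENNReal.inv_mul_cancel hL0 hLtop, one_mul]
        _ ≤ L⁻¹ * (h w * n w) := by gcongr; exact hLh w hw.2
        _ ≤ _ := le_add_self
    · exact le_add_right (Nat.cast_le.mpr (not_lt.mp hT))
  calc ∫⁻ w in A ∩ B, (n w : ℝ≥0∞) ∂μ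
      ≤ ∫⁻ w in A ∩ B, (k + L⁻¹ * T.indicator (fun w => h w * n w) w) ∂μ :=
        setLIntegral_mono' (hA.inter hB) hpt
    _ = k * μ (A ∩ B) + L⁻¹ * ∫⁻ w in A ∩ B, T.indicator (fun w => h w * n w) w ∂μ := by
        rw [lintegral_add_left measurable_const, setLIntegral_const,
          lintegral_const_mul' _ _ (ENNReal.inv_ne_top.mpr hL0)]
    _ ≤ k * μ (A ∩ B) + L⁻¹ * ∫⁻ w in A ∩ T, h w * n w ∂μ := by
        gcongr _ + _ * ?_
        calc ∫⁻ w in A ∩ B, T.indicator (fun w => h w * n w) w ∂μ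
            ≤ ∫⁻ w in A, T.indicator (fun w => h w * n w) w ∂μ :=
              lintegral_mono_set inter_subset_left
          _ ≤ ∫⁻ w in T, h w * n w ∂μ.restrict A := lintegral_indicator_le _ _
          _ = ∫⁻ w in A ∩ T, h w * n w ∂μ := by rw [Measure.restrict_restrict' hA, inter_comm]

lemma inv_pow_mul_Dnorm2_kernelPrimitive_le {z : ℂ} (hz : z ∈ UD) {r : ℝ} (hr : 0 < r) :
    (ENNReal.ofReal ((1 - Real.tanh r) / (2 * (1 - ‖z‖))) ^ 4)⁻¹ * Dnorm2 (kernelPrimitive z)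
      ≤ ENNReal.ofReal (16 / (Real.tanh r ^ 2 * (1 - Real.tanh r) ^ 4)) *
          volume (bergmanBall z r) := by
  set s := Real.tanh r
  set a := 1 - ‖z‖
  have hs : 0 < s := Real.tanh_pos hr
  have hs1 : 0 < 1 - s := sub_pos.mpr (Real.tanh_lt_one r)
  have ha : 0 < a := sub_pos.mpr (mem_UD.mp hz)
  calc (ENNReal.ofReal ((1 - s) / (2 * a)) ^ 4)⁻¹ * Dnorm2 (kernelPrimitive z)
      ≤ ENNReal.ofReal ((2 * a / (1 - s)) ^ 4) * (ENNReal.ofReal (1 / a) ^ 2 * NNReal.pi) := by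
        rw [ENNReal.inv_pow, ← ENNReal.ofReal_inv_of_pos (by positivity), inv_div,
          ENNReal.ofReal_pow (by positivity)]
        gcongr
        exact Dnorm2_kernelPrimitive_le hz
    _ = ENNReal.ofReal (16 / (s ^ 2 * (1 - s) ^ 4)) *
          (ENNReal.ofReal (s * a) ^ 2 * NNReal.pi) := by
        rw [← mul_assoc, ← mul_assoc, ← ENNReal.ofReal_pow (by positivity),
          ← ENNReal.ofReal_pow (by positivity), ← ENNReal.ofReal_mul (by positivity),
          ← ENNReal.ofReal_mul (by positivity)]
        congr 2
        field_simp
        ring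
    _ ≤ _ := by gcongr; exact volume_bergmanBall_ge hz r

def countingTail (φ : ℂ → ℂ) (k : ℕ) : ℝ≥0∞ :=
  ⨆ (f : ℂ → ℂ) (_ : DifferentiableOn ℂ f UD ∧ Dnorm2 f = 1),
    ∫⁻ w in φ '' UD ∩ {w | k < countFn φ w},
      (‖deriv f w‖₊ : ℝ≥0∞) ^ 2 * (countFn φ w : ℝ≥0∞)

lemma lintegral_countFn_bergmanBall_le {φ : ℂ → ℂ} (hφ : DifferentiableOn ℂ φ UD) {z : ℂ}
    (hz : z ∈ UD) {r : ℝ} (hr : 0 < r) (k : ℕ) :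
    ∫⁻ w in φ '' UD ∩ bergmanBall z r, (countFn φ w : ℝ≥0∞)
      ≤ k * volume (φ '' UD ∩ bergmanBall z r) + ENNReal.ofReal
        (16 / (Real.tanh r ^ 2 * (1 - Real.tanh r) ^ 4)) * volume (bergmanBall z r) *
          countingTail φ k := by
  have hL : ENNReal.ofReal ((1 - Real.tanh r) / (2 * (1 - ‖z‖))) ^ 4 ≠ 0 :=
    pow_ne_zero _ (ENNReal.ofReal_pos.mpr (div_pos (sub_pos.mpr (Real.tanh_lt_one r))
      (mul_pos two_pos (sub_pos.mpr (mem_UD.mp hz))))).ne'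
  have hsplit := setLIntegral_le_mul_measure_add_tail (μ := volume) (measurableSet_image_UD hφ)
    (measurableSet_bergmanBall z r) (countFn φ)
    (fun w => (‖deriv (kernelPrimitive z) w‖₊ : ℝ≥0∞) ^ 2) k hL (by finiteness)
    fun w hw => le_nnnorm_deriv_kernelPrimitive_sq hz hw
  have htail := setLIntegral_nnnorm_deriv_sq_mul_le (φ '' UD ∩ {w | k < countFn φ w})
    (fun w => countFn φ w) (differentiableOn_kernelPrimitive hz)
    (Dnorm2_kernelPrimitive_ne_zero hz)
    (ne_top_of_le_ne_top (by finiteness) (Dnorm2_kernelPrimitive_le hz))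
  refine hsplit.trans ?_
  grw [htail, ← mul_assoc, inv_pow_mul_Dnorm2_kernelPrimitive_le hz hr]
  rfl

lemma ENNReal.ofReal_div_natCast_mul_le {ε : ℝ} {k : ℕ} {a b : ℝ≥0∞} (hk : k ≠ 0)
    (h : ENNReal.ofReal ε * a ≤ k * b) : ENNReal.ofReal (ε / k) * a ≤ b :=
  calc ENNReal.ofReal (ε / k) * a = (k : ℝ≥0∞)⁻¹ * (ENNReal.ofReal ε * a) := by
        rw [ENNReal.ofReal_div_of_pos (by positivity), ENNReal.ofReal_natCast, div_eq_mul_inv,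
          mul_comm _ (k : ℝ≥0∞)⁻¹, mul_assoc]
    _ ≤ (k : ℝ≥0∞)⁻¹ * (k * b) := by gcongr
    _ = b := ENNReal.inv_mul_cancel_left (by simpa using hk) (ENNReal.natCast_ne_top k)

theorem stmt14_general (φ : ℂ → ℂ) (hφ : DifferentiableOn ℂ φ UD)
    (hsup : Tendsto (fun k : ℕ =>
      ⨆ (f : ℂ → ℂ) (_ : DifferentiableOn ℂ f UD ∧ Dnorm2 f = 1),
        ∫⁻ w in φ '' UD ∩ {w | k < countFn φ w},
          (‖deriv f w‖₊ : ℝ≥0∞) ^ 2 * (countFn φ w : ℝ≥0∞)) atTop (nhds 0))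
    (δ r : ℝ) (hδ : 0 < δ) (hr : 0 < r)
    (hrc : ∀ z ∈ UD, ENNReal.ofReal δ * volume (bergmanBall z r)
      ≤ ∫⁻ w in φ '' UD ∩ bergmanBall z r, (countFn φ w : ℝ≥0∞)) :
    ∃ δ' : ℝ, 0 < δ' ∧ ∀ z ∈ UD,
      ENNReal.ofReal δ' * volume (bergmanBall z r) ≤ volume (φ '' UD ∩ bergmanBall z r) := by
  set C := 16 / (Real.tanh r ^ 2 * (1 - Real.tanh r) ^ 4)
  have hC : 0 < C := by
    have := Real.tanh_pos hr
    have := Real.tanh_lt_one r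
    positivity
  have htail : Tendsto (countingTail φ) atTop (nhds 0) := hsup
  obtain ⟨k, hk, hk1⟩ := ((htail.eventually (gt_mem_nhds (ENNReal.ofReal_pos.mpr
    (div_pos hδ (mul_pos two_pos hC))))).and (eventually_ge_atTop 1)).exists
  have hCk : ENNReal.ofReal C * countingTail φ k ≤ ENNReal.ofReal (δ / 2) :=
    calc ENNReal.ofReal C * countingTail φ k
        ≤ ENNReal.ofReal C * ENNReal.ofReal (δ / (2 * C)) := by gcongr
      _ = ENNReal.ofReal (δ / 2) := by
          rw [← ENNReal.ofReal_mul hC.le]; congr 1; field_simp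
  refine ⟨δ / 2 / k, by positivity, fun z hz => ENNReal.ofReal_div_natCast_mul_le (by omega) ?_⟩
  refine (ENNReal.add_le_add_iff_right (a := ENNReal.ofReal (δ / 2) * volume (bergmanBall z r))
    (by finiteness [volume_bergmanBall_ne_top z r])).mp ?_
  calc ENNReal.ofReal (δ / 2) * volume (bergmanBall z r)
        + ENNReal.ofReal (δ / 2) * volume (bergmanBall z r)
      = ENNReal.ofReal δ * volume (bergmanBall z r) := by
        rw [← add_mul, ← ENNReal.ofReal_add (by positivity) (by positivity), add_halves]
    _ ≤ _ := (hrc z hz).trans (lintegral_countFn_bergmanBall_le hφ hz hr k)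
    _ ≤ _ := by rw [mul_right_comm]; gcongr

/-- if C_φ is bounded on the Dirichlet space, the tails
sup_{‖f‖=1} ∫_{φ(𝔻)∩{n_φ>k}} |f'|² n_φ dA tend to 0, and n_φ dA is a reverse Carleson
measure, then the area condition A(φ(𝔻)∩D(z,r)) ≥ δ'·A(D(z,r)) holds for some δ' > 0. -/
theorem stmt14 (φ : ℂ → ℂ) (hφ : DifferentiableOn ℂ φ UD) (hmaps : MapsTo φ UD UD)
    (M : ℝ) (hM : 0 < M)
    (hbdd : ∀ f : ℂ → ℂ, DifferentiableOn ℂ f UD →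
      Dnorm2 (f ∘ φ) ≤ ENNReal.ofReal M * Dnorm2 f)
    (hsup : Tendsto (fun k : ℕ =>
      ⨆ (f : ℂ → ℂ) (_ : DifferentiableOn ℂ f UD ∧ Dnorm2 f = 1),
        ∫⁻ w in φ '' UD ∩ {w | k < countFn φ w},
          (‖deriv f w‖₊ : ℝ≥0∞) ^ 2 * (countFn φ w : ℝ≥0∞)) atTop (nhds 0))
    (δ r : ℝ) (hδ : 0 < δ) (hr : 0 < r)
    (hrc : ∀ z ∈ UD, ENNReal.ofReal δ * volume (bergmanBall z r)
      ≤ ∫⁻ w in φ '' UD ∩ bergmanBall z r, (countFn φ w : ℝ≥0∞)) :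
    ∃ δ' : ℝ, 0 < δ' ∧ ∀ z ∈ UD,
      ENNReal.ofReal δ' * volume (bergmanBall z r) ≤ volume (φ '' UD ∩ bergmanBall z r) :=
  stmt14_general φ hφ hsup δ r hδ hr hrc
end
end
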